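/- Let e, d ∈ ℕ, a ∈ ℝ^e, c ∈ [0,1] and r > 0. Let b : ℝ^e → ℝ^e be C² with b, ∇b, ∇²b bounded and let σ : ℝ^e → ℝ^{e×d} be C¹ with σ and ∇σ bounded. Then there exists a constant C > 0, depending only on r, ‖b‖_∞, ‖∇b‖_∞, ‖∇²b‖_∞, ‖σ‖_∞ and ‖∇σ‖_∞, with the following property: if x, x̃ : [0,1] → ℝ^d are C¹ with ∫₀¹ |x'_s| ds ≤ r and ∫₀¹ |x̃'_s| ds ≤ r, if y^0 : [0,1] → ℝ^e is the solution of (y^0)'_t = b(y^0_t), y^0_0 = a, and if ẑ, z̃ : [0,1] → ℝ^e are differentiable with ẑ_0 = z̃_0 = 0, ẑ'_t = ∫₀¹ ∇b(y^0_t + θ c ẑ_t)⟨ẑ_t⟩ dθ + σ(y^0_t + c ẑ_t) x'_t and z̃'_t = ∫₀¹ ∇b(y^0_t + θ c z̃_t)⟨z̃_t⟩ dθ + σ(y^0_t + c z̃_t) x̃'_t for all t, then sup_{t∈[0,1]} |ẑ_t − z̃_t| ≤ C ∫₀¹ |x'_s − x̃'_s| ds. -/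

import Mathlib

open Set MeasureTheory Real

/-!
Both processes solve `z' = A(t, z) z + σ(y⁰ + c z) x'` with a matrix `A` bounded by `‖∇b‖_∞`,
so Grönwall's lemma first bounds `ẑ` and `z̃` by `exp ‖∇b‖_∞ · ‖σ‖_∞ r`. With this bound, the
difference `ẑ - z̃` satisfies `|(ẑ - z̃)'| ≤ K_t |ẑ - z̃| + ‖σ‖_∞ |x' - x̃'|`, where
`K_t = ‖∇b‖_∞ + ‖∇²b‖_∞ sup|z̃| + ‖∇σ‖_∞ |x'_t|` has integral bounded in terms of `r`, and a
second application of Grönwall's lemma (with time-dependent rate) concludes.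
-/

section Gronwall

variable {E : Type*} [NormedAddCommGroup E] [NormedSpace ℝ E] {f f' : ℝ → E} {K h : ℝ → ℝ}
  {a b : ℝ}

/-- The slack `δ * exp t` makes the barrier grow strictly faster than the bound on `‖f'‖`,
as the fencing theorem `image_norm_le_of_norm_deriv_right_lt_deriv_boundary` requires. -/
theorem norm_le_exp_integral_mul_integral_add_of_norm_deriv_le (hK : Continuous K)
    (hh : Continuous h) (hK0 : ∀ t ∈ Icc a b, 0 ≤ K t) (hh0 : ∀ t ∈ Icc a b, 0 ≤ h t)
    (hf : ∀ t ∈ Icc a b, HasDerivAt f (f' t) t) (hfa : f a = 0)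
    (hbound : ∀ t ∈ Icc a b, ‖f' t‖ ≤ K t * ‖f t‖ + h t) {δ : ℝ} (hδ : 0 < δ) :
    ∀ t ∈ Icc a b, ‖f t‖ ≤ exp (∫ s in a..t, K s) * ((∫ s in a..t, h s) + δ * exp t) := by
  have hIK (u : ℝ) : HasDerivAt (fun u => ∫ s in a..u, K s) (K u) u :=
    intervalIntegral.integral_hasDerivAt_right (hK.intervalIntegrable _ _)
      (hK.stronglyMeasurableAtFilter _ _) hK.continuousAt
  have hIh (u : ℝ) : HasDerivAt (fun u => ∫ s in a..u, h s) (h u) u :=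
    intervalIntegral.integral_hasDerivAt_right (hh.intervalIntegrable _ _)
      (hh.stronglyMeasurableAtFilter _ _) hh.continuousAt
  refine image_norm_le_of_norm_deriv_right_lt_deriv_boundary
    (fun t ht => (hf t ht).continuousAt.continuousWithinAt)
    (fun t ht => (hf t (Ico_subset_Icc_self ht)).hasDerivWithinAt) ?_
    (fun u => (hIK u).exp.mul ((hIh u).add ((hasDerivAt_exp u).const_mul δ))) ?_
  · simp only [hfa, norm_zero, intervalIntegral.integral_same, exp_zero, zero_add, one_mul]
    positivity
  · intro t ht hft
    have ht' := Ico_subset_Icc_self ht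
    have hexp : 1 ≤ exp (∫ s in a..t, K s) :=
      one_le_exp (intervalIntegral.integral_nonneg ht'.1 fun s hs => hK0 s ⟨hs.1, hs.2.trans ht'.2⟩)
    calc ‖f' t‖ ≤ K t * ‖f t‖ + h t := hbound t ht'
      _ < _ := by
        rw [hft]
        nlinarith [mul_nonneg (sub_nonneg.2 hexp) (hh0 t ht'),
          mul_pos (exp_pos (∫ s in a..t, K s)) (mul_pos hδ (exp_pos t))]

theorem norm_le_exp_integral_mul_integral_of_norm_deriv_le (hK : Continuous K)
    (hh : Continuous h) (hK0 : ∀ t ∈ Icc a b, 0 ≤ K t) (hh0 : ∀ t ∈ Icc a b, 0 ≤ h t)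
    (hf : ∀ t ∈ Icc a b, HasDerivAt f (f' t) t) (hfa : f a = 0)
    (hbound : ∀ t ∈ Icc a b, ‖f' t‖ ≤ K t * ‖f t‖ + h t) :
    ∀ t ∈ Icc a b, ‖f t‖ ≤ exp (∫ s in a..t, K s) * ∫ s in a..t, h s := by
  intro t ht
  refine le_of_forall_pos_le_add fun ε hε => ?_
  have hpos : 0 < exp (∫ s in a..t, K s) * exp t := by positivity
  calc ‖f t‖ ≤ exp (∫ s in a..t, K s) * ((∫ s in a..t, h s) + ε / (exp (∫ s in a..t, K s) * exp t) * exp t) :=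
        norm_le_exp_integral_mul_integral_add_of_norm_deriv_le hK hh hK0 hh0 hf hfa hbound
          (div_pos hε hpos) t ht
    _ = exp (∫ s in a..t, K s) * (∫ s in a..t, h s) + ε := by
        field_simp

theorem norm_le_exp_mul_of_norm_deriv_le (hK : Continuous K)
    (hh : Continuous h) (hK0 : ∀ t ∈ Icc a b, 0 ≤ K t) (hh0 : ∀ t ∈ Icc a b, 0 ≤ h t)
    (hf : ∀ t ∈ Icc a b, HasDerivAt f (f' t) t) (hfa : f a = 0)
    (hbound : ∀ t ∈ Icc a b, ‖f' t‖ ≤ K t * ‖f t‖ + h t) {κ η : ℝ}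
    (hκ : ∫ s in a..b, K s ≤ κ) (hη : ∫ s in a..b, h s ≤ η) :
    ∀ t ∈ Icc a b, ‖f t‖ ≤ exp κ * η := by
  intro t ht
  have hmono {g : ℝ → ℝ} (hg : Continuous g) (hg0 : ∀ t ∈ Icc a b, 0 ≤ g t) :
      ∫ s in a..t, g s ≤ ∫ s in a..b, g s :=
    intervalIntegral.integral_mono_interval le_rfl ht.1 ht.2
      ((ae_restrict_mem measurableSet_Ioc).mono fun s hs => hg0 s (Ioc_subset_Icc_self hs))
      (hg.intervalIntegrable _ _)
  calc ‖f t‖ ≤ exp (∫ s in a..t, K s) * ∫ s in a..t, h s :=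
        norm_le_exp_integral_mul_integral_of_norm_deriv_le hK hh hK0 hh0 hf hfa hbound t ht
    _ ≤ exp κ * η := by
        gcongr
        · exact intervalIntegral.integral_nonneg ht.1 fun s hs => hh0 s ⟨hs.1, hs.2.trans ht.2⟩
        · exact (hmono hK hK0).trans hκ
        · exact (hmono hh hh0).trans hη

end Gronwall

theorem norm_clm_apply_sub_apply_le {𝕜 E G : Type*} [NontriviallyNormedField 𝕜]
    [NormedAddCommGroup E] [NormedSpace 𝕜 E] [NormedAddCommGroup G] [NormedSpace 𝕜 G]
    (A A' : E →L[𝕜] G) (v v' : E) :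
    ‖A v - A' v'‖ ≤ ‖A - A'‖ * ‖v‖ + ‖A'‖ * ‖v - v'‖ :=
  calc ‖A v - A' v'‖ = ‖(A - A') v + A' (v - v')‖ := by
        rw [sub_apply, map_sub, sub_add_sub_cancel]
    _ ≤ ‖A - A'‖ * ‖v‖ + ‖A'‖ * ‖v - v'‖ :=
        (norm_add_le _ _).trans (add_le_add ((A - A').le_opNorm v) (A'.le_opNorm _))

theorem norm_sub_le_of_norm_fderiv_le_of_abs_le_one {E G : Type*} [NormedAddCommGroup E]
    [NormedSpace ℝ E] [NormedAddCommGroup G] [NormedSpace ℝ G] {g : E → G} {L : ℝ}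
    (hg : Differentiable ℝ g) (hL : ∀ y, ‖fderiv ℝ g y‖ ≤ L) {s : ℝ} (hs : |s| ≤ 1)
    (y w w' : E) : ‖g (y + s • w) - g (y + s • w')‖ ≤ L * ‖w - w'‖ :=
  calc ‖g (y + s • w) - g (y + s • w')‖ ≤ L * ‖(y + s • w) - (y + s • w')‖ :=
        convex_univ.norm_image_sub_le_of_norm_fderiv_le (fun x _ => hg x) (fun x _ => hL x)
          trivial trivial
    _ = L * (|s| * ‖w - w'‖) := by
        rw [add_sub_add_left_eq_sub, ← smul_sub, norm_smul, Real.norm_eq_abs]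
    _ ≤ L * ‖w - w'‖ := by
        have := (norm_nonneg _).trans (hL y)
        gcongr
        exact mul_le_of_le_one_left (norm_nonneg _) hs

section RescaledField

variable {E F : Type*} [NormedAddCommGroup E] [NormedSpace ℝ E] [NormedAddCommGroup F]
  [NormedSpace ℝ F] {b : E → E} {σ : E → F →L[ℝ] E} {c B1 B2 S0 S1 r : ℝ}

/-- The rescaled process solves `ẑ'_t = rescaledField b σ c (y⁰_t) ẑ_t x'_t`. -/
noncomputable def rescaledField (b : E → E) (σ : E → F →L[ℝ] E) (c : ℝ) (y w : E) (u : F) : E :=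
  (∫ θ in (0:ℝ)..1, fderiv ℝ b (y + (θ * c) • w) w) + σ (y + c • w) u

theorem norm_rescaledField_le (hB1 : ∀ y, ‖fderiv ℝ b y‖ ≤ B1) (hS0 : ∀ y, ‖σ y‖ ≤ S0)
    (y w : E) (u : F) : ‖rescaledField b σ c y w u‖ ≤ B1 * ‖w‖ + S0 * ‖u‖ := by
  refine (norm_add_le _ _).trans (add_le_add ?_ ((σ _).le_of_opNorm_le (hS0 _) u))
  simpa using intervalIntegral.norm_integral_le_of_norm_le_const (a := 0) (b := 1)
    fun θ _ => (fderiv ℝ b (y + (θ * c) • w)).le_of_opNorm_le (hB1 _) w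

theorem norm_rescaledField_sub_le (hc : c ∈ Icc 0 1) (hDb : Differentiable ℝ (fderiv ℝ b))
    (hB1 : ∀ y, ‖fderiv ℝ b y‖ ≤ B1) (hB2 : ∀ y, ‖fderiv ℝ (fderiv ℝ b) y‖ ≤ B2)
    (hσ : Differentiable ℝ σ) (hS0 : ∀ y, ‖σ y‖ ≤ S0) (hS1 : ∀ y, ‖fderiv ℝ σ y‖ ≤ S1)
    (y w w' : E) (u u' : F) :
    ‖rescaledField b σ c y w u - rescaledField b σ c y w' u'‖ ≤
      (B1 + B2 * ‖w'‖ + S1 * ‖u‖) * ‖w - w'‖ + S0 * ‖u - u'‖ := by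
  have hcont (v : E) : Continuous fun θ : ℝ => fderiv ℝ b (y + (θ * c) • v) v :=
    (hDb.continuous.comp (by fun_prop)).clm_apply continuous_const
  have hdrift : ‖(∫ θ in (0:ℝ)..1, fderiv ℝ b (y + (θ * c) • w) w) -
      ∫ θ in (0:ℝ)..1, fderiv ℝ b (y + (θ * c) • w') w'‖ ≤ (B1 + B2 * ‖w'‖) * ‖w - w'‖ := by
    rw [← intervalIntegral.integral_sub ((hcont w).intervalIntegrable 0 1)
      ((hcont w').intervalIntegrable 0 1)]
    refine (intervalIntegral.norm_integral_le_of_norm_le_const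
      (C := (B1 + B2 * ‖w'‖) * ‖w - w'‖) fun θ hθ => ?_).trans_eq (by simp)
    rw [uIoc_of_le zero_le_one] at hθ
    have hθc : |θ * c| ≤ 1 := by
      rw [abs_mul, abs_of_pos hθ.1, abs_of_nonneg hc.1]
      exact mul_le_one₀ hθ.2 hc.1 hc.2
    rw [norm_sub_rev]
    calc _ ≤ ‖fderiv ℝ b (y + (θ * c) • w') - fderiv ℝ b (y + (θ * c) • w)‖ * ‖w'‖ +
          ‖fderiv ℝ b (y + (θ * c) • w)‖ * ‖w' - w‖ := norm_clm_apply_sub_apply_le _ _ _ _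
      _ ≤ B2 * ‖w - w'‖ * ‖w'‖ + B1 * ‖w - w'‖ := by
          rw [norm_sub_rev w', norm_sub_rev (fderiv ℝ b _)]
          gcongr
          exacts [norm_sub_le_of_norm_fderiv_le_of_abs_le_one hDb hB2 hθc y w w', hB1 _]
      _ = (B1 + B2 * ‖w'‖) * ‖w - w'‖ := by ring
  have hdiffusion : ‖σ (y + c • w) u - σ (y + c • w') u'‖ ≤
      S1 * ‖u‖ * ‖w - w'‖ + S0 * ‖u - u'‖ :=
    calc _ ≤ ‖σ (y + c • w) - σ (y + c • w')‖ * ‖u‖ + ‖σ (y + c • w')‖ * ‖u - u'‖ :=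
          norm_clm_apply_sub_apply_le _ _ _ _
      _ ≤ S1 * ‖w - w'‖ * ‖u‖ + S0 * ‖u - u'‖ := by
          gcongr
          exacts [norm_sub_le_of_norm_fderiv_le_of_abs_le_one hσ hS1
            (abs_le.2 ⟨by linarith [hc.1], hc.2⟩) y w w', hS0 _]
      _ = S1 * ‖u‖ * ‖w - w'‖ + S0 * ‖u - u'‖ := by ring
  calc _ ≤ _ := by
        rw [rescaledField, rescaledField, add_sub_add_comm]
        exact norm_add_le _ _
    _ ≤ _ := add_le_add hdrift hdiffusion
    _ = _ := by ring

theorem norm_le_of_hasDerivAt_rescaledField (hB1 : ∀ y, ‖fderiv ℝ b y‖ ≤ B1)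
    (hS0 : ∀ y, ‖σ y‖ ≤ S0) {y0 w : ℝ → E} {u : ℝ → F} (hu : Continuous u)
    (hur : ∫ s in (0:ℝ)..1, ‖u s‖ ≤ r) (hw0 : w 0 = 0)
    (hw : ∀ t ∈ Icc (0:ℝ) 1, HasDerivAt w (rescaledField b σ c (y0 t) (w t) (u t)) t) :
    ∀ t ∈ Icc (0:ℝ) 1, ‖w t‖ ≤ exp B1 * (S0 * r) := by
  have hB1_nonneg : 0 ≤ B1 := (norm_nonneg _).trans (hB1 0)
  have hS0_nonneg : 0 ≤ S0 := (norm_nonneg _).trans (hS0 0)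
  refine norm_le_exp_mul_of_norm_deriv_le (K := fun _ => B1) (h := fun s => S0 * ‖u s‖)
    continuous_const (by fun_prop) (fun _ _ => hB1_nonneg) (fun _ _ => by positivity) hw hw0
    (fun t _ => norm_rescaledField_le hB1 hS0 (y0 t) (w t) (u t)) (by simp) ?_
  rw [intervalIntegral.integral_const_mul]
  gcongr

theorem norm_sub_le_of_hasDerivAt_rescaledField (hc : c ∈ Icc 0 1)
    (hDb : Differentiable ℝ (fderiv ℝ b)) (hB1 : ∀ y, ‖fderiv ℝ b y‖ ≤ B1)
    (hB2 : ∀ y, ‖fderiv ℝ (fderiv ℝ b) y‖ ≤ B2) (hσ : Differentiable ℝ σ)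
    (hS0 : ∀ y, ‖σ y‖ ≤ S0) (hS1 : ∀ y, ‖fderiv ℝ σ y‖ ≤ S1) {y0 z z' : ℝ → E}
    {u u' : ℝ → F} (hu : Continuous u) (hu' : Continuous u')
    (hur : ∫ s in (0:ℝ)..1, ‖u s‖ ≤ r) (hu'r : ∫ s in (0:ℝ)..1, ‖u' s‖ ≤ r)
    (hz0 : z 0 = 0) (hz'0 : z' 0 = 0)
    (hz : ∀ t ∈ Icc (0:ℝ) 1, HasDerivAt z (rescaledField b σ c (y0 t) (z t) (u t)) t)
    (hz' : ∀ t ∈ Icc (0:ℝ) 1, HasDerivAt z' (rescaledField b σ c (y0 t) (z' t) (u' t)) t) :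
    ∀ t ∈ Icc (0:ℝ) 1, ‖z t - z' t‖ ≤
      exp (B1 + B2 * (exp B1 * (S0 * r)) + S1 * r) * (S0 * ∫ s in (0:ℝ)..1, ‖u s - u' s‖) := by
  set M := exp B1 * (S0 * r)
  have hz'M : ∀ t ∈ Icc (0:ℝ) 1, ‖z' t‖ ≤ M := norm_le_of_hasDerivAt_rescaledField hB1 hS0 hu' hu'r hz'0 hz'
  have hB1_nonneg : 0 ≤ B1 := (norm_nonneg _).trans (hB1 0)
  have hB2_nonneg : 0 ≤ B2 := (norm_nonneg (fderiv ℝ (fderiv ℝ b) 0)).trans (hB2 0)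
  have hS0_nonneg : 0 ≤ S0 := (norm_nonneg _).trans (hS0 0)
  have hS1_nonneg : 0 ≤ S1 := (norm_nonneg (fderiv ℝ σ 0)).trans (hS1 0)
  have hM_nonneg : 0 ≤ M := (norm_nonneg _).trans (hz'M 0 (left_mem_Icc.2 zero_le_one))
  refine norm_le_exp_mul_of_norm_deriv_le (f := fun t => z t - z' t)
    (K := fun s => B1 + B2 * M + S1 * ‖u s‖) (h := fun s => S0 * ‖u s - u' s‖)
    (by fun_prop) (by fun_prop) (fun _ _ => by positivity) (fun _ _ => by positivity)
    (fun t ht => (hz t ht).sub (hz' t ht)) (by simp [hz0, hz'0]) (fun t ht => ?_) ?_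
    (intervalIntegral.integral_const_mul _ _).le
  · refine (norm_rescaledField_sub_le hc hDb hB1 hB2 hσ hS0 hS1 _ _ _ _ _).trans ?_
    gcongr
    exact hz'M t ht
  · rw [intervalIntegral.integral_add intervalIntegrable_const
      ((by fun_prop : Continuous fun s => S1 * ‖u s‖).intervalIntegrable _ _),
      intervalIntegral.integral_const, intervalIntegral.integral_const_mul]
    simp only [sub_zero, one_smul]
    gcongr

end RescaledField

theorem stmt_12_general (e d : ℕ) (a : EuclideanSpace ℝ (Fin e)) (c : ℝ)
    (hc : c ∈ Set.Icc (0:ℝ) 1) (r Bb B1 B2 S0 S1 : ℝ) :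
    ∃ C > (0:ℝ),
      ∀ (b : EuclideanSpace ℝ (Fin e) → EuclideanSpace ℝ (Fin e))
        (σ : EuclideanSpace ℝ (Fin e) →
          (EuclideanSpace ℝ (Fin d) →L[ℝ] EuclideanSpace ℝ (Fin e))),
        ContDiff ℝ 2 b → (∀ y, ‖b y‖ ≤ Bb) → (∀ y, ‖fderiv ℝ b y‖ ≤ B1) →
        (∀ y, ‖fderiv ℝ (fderiv ℝ b) y‖ ≤ B2) →
        ContDiff ℝ 1 σ → (∀ y, ‖σ y‖ ≤ S0) → (∀ y, ‖fderiv ℝ σ y‖ ≤ S1) →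
        ∀ (x x' xt xt' : ℝ → EuclideanSpace ℝ (Fin d)),
          (∀ s, HasDerivAt x (x' s) s) → Continuous x' →
          (∀ s, HasDerivAt xt (xt' s) s) → Continuous xt' →
          (∫ s in (0:ℝ)..1, ‖x' s‖) ≤ r → (∫ s in (0:ℝ)..1, ‖xt' s‖) ≤ r →
          ∀ (y0 z zt : ℝ → EuclideanSpace ℝ (Fin e)),
            y0 0 = a → (∀ t ∈ Set.Icc (0:ℝ) 1, HasDerivAt y0 (b (y0 t)) t) →
            z 0 = 0 → zt 0 = 0 →
            (∀ t ∈ Set.Icc (0:ℝ) 1, HasDerivAt z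
              ((∫ θ in (0:ℝ)..1, fderiv ℝ b (y0 t + (θ * c) • z t) (z t)) +
                σ (y0 t + c • z t) (x' t)) t) →
            (∀ t ∈ Set.Icc (0:ℝ) 1, HasDerivAt zt
              ((∫ θ in (0:ℝ)..1, fderiv ℝ b (y0 t + (θ * c) • zt t) (zt t)) +
                σ (y0 t + c • zt t) (xt' t)) t) →
            ∀ t ∈ Set.Icc (0:ℝ) 1,
              ‖z t - zt t‖ ≤ C * ∫ s in (0:ℝ)..1, ‖x' s - xt' s‖ := by
  refine ⟨max (exp (B1 + B2 * (exp B1 * (S0 * r)) + S1 * r) * S0) 1,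
    lt_max_of_lt_right one_pos, ?_⟩
  intro b σ hb _ hB1 hB2 hσ hS0 hS1 x x' xt xt' _ hx' _ hxt' hxr hxtr y0 z zt _ _ hz0 hzt0
    hz hzt t ht
  have hDb : Differentiable ℝ (fderiv ℝ b) :=
    (hb.fderiv_right (m := 1) le_rfl).differentiable one_ne_zero
  have hI : 0 ≤ ∫ s in (0:ℝ)..1, ‖x' s - xt' s‖ :=
    intervalIntegral.integral_nonneg zero_le_one fun _ _ => norm_nonneg _
  calc ‖z t - zt t‖
      ≤ exp (B1 + B2 * (exp B1 * (S0 * r)) + S1 * r) * (S0 * ∫ s in (0:ℝ)..1, ‖x' s - xt' s‖) :=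
        norm_sub_le_of_hasDerivAt_rescaledField hc hDb hB1 hB2
          (hσ.differentiable one_ne_zero) hS0 hS1 hx' hxt' hxr hxtr hz0 hzt0 hz hzt t ht
    _ ≤ _ := by
        rw [← mul_assoc]
        gcongr
        exact le_max_left _ _

/-- Stability in the driving path: there is a constant `C > 0`,
depending only on `r` and on the bounds for `b, ∇b, ∇²b, σ, ∇σ`, such that for any two
`C¹` drivers `x, x̃` with `∫₀¹|x'| ≤ r`, `∫₀¹|x̃'| ≤ r`, the corresponding rescaled
processes satisfy `sup_{t∈[0,1]} |ẑ_t − z̃_t| ≤ C ∫₀¹ |x'_s − x̃'_s| ds`. -/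
theorem stmt_12 (e d : ℕ) (a : EuclideanSpace ℝ (Fin e)) (c : ℝ)
    (hc : c ∈ Set.Icc (0:ℝ) 1) (r Bb B1 B2 S0 S1 : ℝ) (hr : 0 < r) :
    ∃ C > (0:ℝ),
      ∀ (b : EuclideanSpace ℝ (Fin e) → EuclideanSpace ℝ (Fin e))
        (σ : EuclideanSpace ℝ (Fin e) →
          (EuclideanSpace ℝ (Fin d) →L[ℝ] EuclideanSpace ℝ (Fin e))),
        ContDiff ℝ 2 b → (∀ y, ‖b y‖ ≤ Bb) → (∀ y, ‖fderiv ℝ b y‖ ≤ B1) →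
        (∀ y, ‖fderiv ℝ (fderiv ℝ b) y‖ ≤ B2) →
        ContDiff ℝ 1 σ → (∀ y, ‖σ y‖ ≤ S0) → (∀ y, ‖fderiv ℝ σ y‖ ≤ S1) →
        ∀ (x x' xt xt' : ℝ → EuclideanSpace ℝ (Fin d)),
          (∀ s, HasDerivAt x (x' s) s) → Continuous x' →
          (∀ s, HasDerivAt xt (xt' s) s) → Continuous xt' →
          (∫ s in (0:ℝ)..1, ‖x' s‖) ≤ r → (∫ s in (0:ℝ)..1, ‖xt' s‖) ≤ r →
          ∀ (y0 z zt : ℝ → EuclideanSpace ℝ (Fin e)),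
            y0 0 = a → (∀ t ∈ Set.Icc (0:ℝ) 1, HasDerivAt y0 (b (y0 t)) t) →
            z 0 = 0 → zt 0 = 0 →
            (∀ t ∈ Set.Icc (0:ℝ) 1, HasDerivAt z
              ((∫ θ in (0:ℝ)..1, fderiv ℝ b (y0 t + (θ * c) • z t) (z t)) +
                σ (y0 t + c • z t) (x' t)) t) →
            (∀ t ∈ Set.Icc (0:ℝ) 1, HasDerivAt zt
              ((∫ θ in (0:ℝ)..1, fderiv ℝ b (y0 t + (θ * c) • zt t) (zt t)) +
                σ (y0 t + c • zt t) (xt' t)) t) →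
            ∀ t ∈ Set.Icc (0:ℝ) 1,
              ‖z t - zt t‖ ≤ C * ∫ s in (0:ℝ)..1, ‖x' s - xt' s‖ :=
  stmt_12_general e d a c hc r Bb B1 B2 S0 S1
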